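/- For 1 ≤ i ≤ C, if f, g ∈ ℂ[X,Y] satisfy r·f = ζ^{−i} f, r·g = ζ^{i} g, and s·f = −g, then the pair (f, g) lies in the ℂ[X,Y]-submodule of ℂ[X,Y]² generated by (Y^i, −X^i) and (X^{n−i}, −Y^{n−i}). -/

import Mathlib

/-!
Both `Xⁱ f + Yⁱ g` and `Y^{n-i} f + X^{n-i} g` are fixed by `r` and negated by `s`. Such a
polynomial `h` is divisible by `Xⁿ - Yⁿ`: `r`-invariance forces `a ≡ b (mod n)` for every
monomial `X^a Y^b` of `h`, and `2h = h - s·h` is a combination of the binomials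
`X^a Y^b - X^b Y^a`, each a multiple of `Xⁿ - Yⁿ`. The linear system expressing these two
polynomials in `f, g` has determinant `Xⁿ - Yⁿ`, so Cramer's rule writes `(f, g)` as a
combination of the two generators.
-/

open MvPolynomial

noncomputable section

/-- The action of the generator `r` of the dihedral group `D_n` on `ℂ[X,Y]`:
the `ℂ`-algebra automorphism determined by `X ↦ ζ·X`, `Y ↦ ζ⁻¹·Y`. -/
def rAct (ζ : ℂ) : MvPolynomial (Fin 2) ℂ →ₐ[ℂ] MvPolynomial (Fin 2) ℂ :=
  aeval ![ζ • X 0, ζ⁻¹ • X 1]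

/-- The action of the generator `s` of the dihedral group `D_n` on `ℂ[X,Y]`:
the `ℂ`-algebra automorphism determined by `X ↦ Y`, `Y ↦ X`. -/
def sAct : MvPolynomial (Fin 2) ℂ →ₐ[ℂ] MvPolynomial (Fin 2) ℂ :=
  aeval ![X 1, X 0]

theorem pow_sub_pow_dvd_mul_sub_mul {R : Type*} [CommRing R] (x y : R) {n a b : ℕ}
    (hab : a ≡ b [MOD n]) : x ^ n - y ^ n ∣ x ^ a * y ^ b - x ^ b * y ^ a := by
  wlog hba : b ≤ a generalizing a b
  · rw [← dvd_neg, neg_sub]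
    exact this hab.symm (by omega)
  obtain ⟨k, hk⟩ := (Nat.modEq_iff_dvd' hba).mp hab.symm
  obtain ⟨w, hw⟩ := sub_dvd_pow_sub_pow (x ^ n) (y ^ n) k
  refine ⟨x ^ b * y ^ b * w, ?_⟩
  rw [show a = b + n * k by omega, pow_add, pow_add, pow_mul, pow_mul]
  linear_combination x ^ b * y ^ b * hw

theorem AlgHom.map_mul_eq_self_of_eigen {K A : Type*} [Field K] [CommSemiring A] [Algebra K A]
    (φ : A →ₐ[K] A) {a : K} (ha : a ≠ 0) {p q : A} (hp : φ p = a • p) (hq : φ q = a⁻¹ • q) :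
    φ (p * q) = p * q := by
  rw [map_mul, hp, hq, smul_mul_smul_comm, mul_inv_cancel₀ ha, one_smul]

theorem monomial_fin_two (e : Fin 2 →₀ ℕ) (c : ℂ) :
    monomial e c = C c * X 0 ^ e 0 * X 1 ^ e 1 := by
  rw [monomial_eq, Finsupp.prod_fintype _ _ (by simp), Fin.prod_univ_two, mul_assoc]

theorem rAct_X_zero_pow (ζ : ℂ) (m : ℕ) : rAct ζ (X 0 ^ m) = ζ ^ m • X 0 ^ m := by
  simp [rAct, smul_pow]

theorem rAct_X_one_pow (ζ : ℂ) (m : ℕ) : rAct ζ (X 1 ^ m) = (ζ ^ m)⁻¹ • X 1 ^ m := by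
  simp [rAct, smul_pow]

theorem sAct_X_zero : sAct (X 0) = X 1 := by simp [sAct]

theorem sAct_X_one : sAct (X 1) = X 0 := by simp [sAct]

theorem sAct_monomial (e : Fin 2 →₀ ℕ) (c : ℂ) :
    sAct (monomial e c) = C c * X 1 ^ e 0 * X 0 ^ e 1 := by
  simp [monomial_fin_two, sAct]

theorem sAct_sAct (p : MvPolynomial (Fin 2) ℂ) : sAct (sAct p) = p := by
  have : sAct.comp sAct = AlgHom.id ℂ _ := by
    ext i
    fin_cases i <;> simp [sAct]
  exact DFunLike.congr_fun this p

theorem coeff_rAct (ζ : ℂ) (e : Fin 2 →₀ ℕ) (p : MvPolynomial (Fin 2) ℂ) :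
    coeff e (rAct ζ p) = ζ ^ e 0 * (ζ ^ e 1)⁻¹ * coeff e p := by
  induction p using MvPolynomial.induction_on' with
  | monomial d c =>
    have : rAct ζ (monomial d c) = (ζ ^ d 0 * (ζ ^ d 1)⁻¹) • monomial d c := by
      rw [monomial_fin_two, map_mul, map_mul, rAct_X_zero_pow, rAct_X_one_pow]
      simp only [algHom_C, algebraMap_eq, smul_eq_C_mul, map_mul]
      ring
    rw [this, coeff_smul, coeff_monomial, smul_eq_mul]
    split_ifs with h
    · rw [h]
    · simp
  | add p q hp hq => rw [map_add, coeff_add, coeff_add, hp, hq, mul_add]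

theorem modEq_of_mem_support_of_rAct_eq_self {n : ℕ} (hn : 0 < n) {ζ : ℂ}
    (hζ : IsPrimitiveRoot ζ n) {p : MvPolynomial (Fin 2) ℂ} (hp : rAct ζ p = p)
    {e : Fin 2 →₀ ℕ} (he : e ∈ p.support) : e 0 ≡ e 1 [MOD n] := by
  have hcoeff := coeff_rAct ζ e p
  rw [hp, eq_comm, mul_eq_right₀ (mem_support_iff.mp he),
    mul_inv_eq_one₀ (pow_ne_zero _ (hζ.ne_zero hn.ne'))] at hcoeff
  rwa [(hζ.isOfFinOrder hn.ne').pow_eq_pow_iff_modEq, ← hζ.eq_orderOf] at hcoeff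

theorem X_pow_sub_X_pow_dvd {n : ℕ} (hn : 0 < n) {ζ : ℂ} (hζ : IsPrimitiveRoot ζ n)
    {p : MvPolynomial (Fin 2) ℂ} (hr : rAct ζ p = p) (hs : sAct p = -p) :
    X 0 ^ n - X 1 ^ n ∣ p := by
  have hsum : C 2 * p =
      ∑ e ∈ p.support, C (coeff e p) * (X 0 ^ e 0 * X 1 ^ e 1 - X 0 ^ e 1 * X 1 ^ e 0) := by
    have : C 2 * p = p - sAct p := by rw [hs, map_ofNat]; ring
    conv_lhs => rw [this, as_sum p, map_sum, ← Finset.sum_sub_distrib]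
    refine Finset.sum_congr rfl fun e _ => ?_
    rw [sAct_monomial, monomial_fin_two]
    ring
  have hunit : IsUnit (C 2 : MvPolynomial (Fin 2) ℂ) := (Ne.isUnit two_ne_zero).map C
  rw [← hunit.dvd_mul_left, hsum]
  exact Finset.dvd_sum fun e he => dvd_mul_of_dvd_right
    (pow_sub_pow_dvd_mul_sub_mul _ _ (modEq_of_mem_support_of_rAct_eq_self hn hζ hr he)) _

theorem eq_of_mul_add_mul_eq_det_mul {R : Type*} [CommRing R] [IsDomain R]
    {a b c d f g q₁ q₂ : R} (hdet : a * d - b * c ≠ 0)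
    (h₁ : a * f + b * g = (a * d - b * c) * q₁) (h₂ : c * f + d * g = (a * d - b * c) * q₂) :
    f = d * q₁ - b * q₂ ∧ g = a * q₂ - c * q₁ :=
  ⟨mul_left_cancel₀ hdet (by linear_combination d * h₁ - b * h₂),
    mul_left_cancel₀ hdet (by linear_combination a * h₂ - c * h₁)⟩

theorem X_pow_sub_X_pow_dvd_mul_add_sAct_mul {n : ℕ} (hn : 0 < n) {ζ : ℂ}
    (hζ : IsPrimitiveRoot ζ n) {a : ℂ} (ha : a ≠ 0) {f g p : MvPolynomial (Fin 2) ℂ}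
    (hrf : rAct ζ f = a⁻¹ • f) (hrg : rAct ζ g = a • g) (hsf : sAct f = -g)
    (hrp : rAct ζ p = a • p) (hrsp : rAct ζ (sAct p) = a⁻¹ • sAct p) :
    X 0 ^ n - X 1 ^ n ∣ p * f + sAct p * g := by
  have hsg : sAct g = -f := by rw [← neg_neg g, ← hsf, map_neg, sAct_sAct]
  refine X_pow_sub_X_pow_dvd hn hζ ?_ ?_
  · rw [map_add, (rAct ζ).map_mul_eq_self_of_eigen ha hrp hrf, mul_comm (sAct p),
      (rAct ζ).map_mul_eq_self_of_eigen ha hrg hrsp, mul_comm]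
  · rw [map_add, map_mul, map_mul, sAct_sAct, hsf, hsg]
    ring

theorem stmt_18_general (n : ℕ) (hn : 3 ≤ n) (ζ : ℂ) (hζ : IsPrimitiveRoot ζ n)
    (i : ℕ) (hiC : i ≤ (n - 1) / 2)
    (f g : MvPolynomial (Fin 2) ℂ)
    (hrf : rAct ζ f = (ζ ^ (-(i : ℤ))) • f) (hrg : rAct ζ g = (ζ ^ (i : ℤ)) • g)
    (hsf : sAct f = -g) :
    (f, g) ∈ Submodule.span (MvPolynomial (Fin 2) ℂ)
      {((X 1 : MvPolynomial (Fin 2) ℂ) ^ i, -(X 0 : MvPolynomial (Fin 2) ℂ) ^ i),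
       ((X 0 : MvPolynomial (Fin 2) ℂ) ^ (n - i), -(X 1 : MvPolynomial (Fin 2) ℂ) ^ (n - i))} := by
  have hn0 : 0 < n := by omega
  have hζi : ζ ^ i ≠ 0 := pow_ne_zero _ (hζ.ne_zero hn0.ne')
  have hζj : ζ ^ (n - i) = (ζ ^ i)⁻¹ := eq_inv_of_mul_eq_one_left <| by
    rw [← pow_add, Nat.sub_add_cancel (by omega), hζ.pow_eq_one]
  rw [zpow_neg, zpow_natCast] at hrf
  rw [zpow_natCast] at hrg
  obtain ⟨q₁, hq₁⟩ : X 0 ^ n - X 1 ^ n ∣ X 0 ^ i * f + X 1 ^ i * g := by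
    have := X_pow_sub_X_pow_dvd_mul_add_sAct_mul hn0 hζ hζi hrf hrg hsf (rAct_X_zero_pow ζ i)
      (by rw [map_pow, sAct_X_zero, rAct_X_one_pow])
    rwa [map_pow, sAct_X_zero] at this
  obtain ⟨q₂, hq₂⟩ : X 0 ^ n - X 1 ^ n ∣ X 1 ^ (n - i) * f + X 0 ^ (n - i) * g := by
    have := X_pow_sub_X_pow_dvd_mul_add_sAct_mul hn0 hζ hζi hrf hrg hsf
      (by rw [rAct_X_one_pow, hζj, inv_inv]) (by rw [map_pow, sAct_X_one, rAct_X_zero_pow, hζj])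
    rwa [map_pow, sAct_X_one] at this
  have hdet : (X 0 : MvPolynomial (Fin 2) ℂ) ^ i * X 0 ^ (n - i) - X 1 ^ i * X 1 ^ (n - i) =
      X 0 ^ n - X 1 ^ n := by
    rw [← pow_add, ← pow_add, Nat.add_sub_cancel' (by omega)]
  have hdet0 : (X 0 : MvPolynomial (Fin 2) ℂ) ^ n - X 1 ^ n ≠ 0 := fun h => by
    simpa [zero_pow hn0.ne'] using congrArg (eval ![1, 0]) h
  obtain ⟨hf, hg⟩ := eq_of_mul_add_mul_eq_det_mul (hdet ▸ hdet0) (hdet ▸ hq₁) (hdet ▸ hq₂)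
  refine Submodule.mem_span_pair.mpr ⟨-q₂, q₁, Prod.ext ?_ ?_⟩
  · simp only [Prod.fst_add, Prod.smul_fst, smul_eq_mul, hf]; ring
  · simp only [Prod.snd_add, Prod.smul_snd, smul_eq_mul, hg]; ring

/-- Let `n ≥ 3` be odd, `ζ` a primitive `n`-th root of unity, `C = (n-1)/2`, and let `W = D_n`
act on `ℂ[X,Y]` by `r·X = ζX`, `r·Y = ζ⁻¹Y`, `s·X = Y`, `s·Y = X`.  For `1 ≤ i ≤ C`, if
`f, g ∈ ℂ[X,Y]` satisfy `r·f = ζ⁻ⁱ·f`, `r·g = ζⁱ·g` and `s·f = -g`, then `(f, g)` lies in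
the `ℂ[X,Y]`-submodule of `ℂ[X,Y]²` generated by `(Yⁱ, -Xⁱ)` and `(X^{n-i}, -Y^{n-i})`. -/
theorem stmt_18 (n : ℕ) (hn : 3 ≤ n) (hodd : Odd n) (ζ : ℂ) (hζ : IsPrimitiveRoot ζ n)
    (i : ℕ) (hi : 1 ≤ i) (hiC : i ≤ (n - 1) / 2)
    (f g : MvPolynomial (Fin 2) ℂ)
    (hrf : rAct ζ f = (ζ ^ (-(i : ℤ))) • f) (hrg : rAct ζ g = (ζ ^ (i : ℤ)) • g)
    (hsf : sAct f = -g) :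
    (f, g) ∈ Submodule.span (MvPolynomial (Fin 2) ℂ)
      {((X 1 : MvPolynomial (Fin 2) ℂ) ^ i, -(X 0 : MvPolynomial (Fin 2) ℂ) ^ i),
       ((X 0 : MvPolynomial (Fin 2) ℂ) ^ (n - i), -(X 1 : MvPolynomial (Fin 2) ℂ) ^ (n - i))} :=
  stmt_18_general n hn ζ hζ i hiC f g hrf hrg hsf

end
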